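/- arXiv:2309.11596 — 2 statements merged into one kernel-verified Lean document; each statement's English description precedes it below -/
import Mathlib

section
/- The set of matrices P ∈ Mat_{4×4}(ℝ) that are symmetric, idempotent (P² = P), of trace 2, and have diagonal entries (1, 1/3, 1/3, 1/3) consists of exactly four elements, namely the block-diagonal matrices P = Diag(1) ⊕ (1/3)·v vᵀ, where v ∈ ℝ³ runs over the four vectors (1, ε₂, ε₃) with ε₂, ε₃ ∈ {+1, −1}. In particular this level set of the Schur–Horn map is a finite four-point set and is not connected. -/
/-!
A real symmetric idempotent `P` is an orthogonal projection, so `P i i = ∑ j, P i j ^ 2`.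
With `P 0 0 = 1` this kills the rest of row and column `0`. The three remaining diagonal
equations give `P 1 2 ^ 2 = P 1 3 ^ 2 = 1 / 9`, and the `(2, 3)` entry of `P * P = P` gives
`P 2 3 = 3 * P 1 2 * P 1 3`; this leaves exactly the four matrices `proj8 (±1) (±1)`.
Conversely `proj8 ε₂ ε₃ = e₀ e₀ᵀ + (1/3) w wᵀ` with `w = (0, 1, ε₂, ε₃)` is a projection,
because `e₀ ⊥ w` and `|w|² = 3`. Finally, a finite set of two or more points in a T1 space is
not connected.
-/

/-- The Schur–Horn level set over `(1, 1/3, 1/3, 1/3)` in `Gr_2(ℝ⁴)`. -/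
def level8 : Set (Matrix (Fin 4) (Fin 4) ℝ) :=
  {P | P.IsSymm ∧ P * P = P ∧ P.trace = 2 ∧ ∀ i, P i i = ![1, 1/3, 1/3, 1/3] i}

/-- The block-diagonal matrix `Diag(1) ⊕ (1/3)·v vᵀ` with `v = (1, ε₂, ε₃)`. -/
noncomputable def proj8 (ε₂ ε₃ : ℝ) : Matrix (Fin 4) (Fin 4) ℝ :=
  Matrix.of fun i j =>
    if i = 0 ∧ j = 0 then 1
    else if i = 0 ∨ j = 0 then 0
    else (1/3) * (![0, 1, ε₂, ε₃] i) * (![0, 1, ε₂, ε₃] j)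

namespace Matrix

variable {n R : Type*}

theorem IsSymm.apply_self_eq_sum_mul_self [Fintype n] [NonUnitalNonAssocSemiring R]
    {P : Matrix n n R} (hs : P.IsSymm) (hP : IsIdempotentElem P) (i : n) :
    P i i = ∑ j, P i j * P i j := by
  conv_lhs => rw [← hP.eq]
  simp only [mul_apply, hs.apply]

theorem IsSymm.apply_eq_zero_of_apply_self_eq_one [Fintype n] [DecidableEq n] [Ring R]
    [LinearOrder R] [IsStrictOrderedRing R] {P : Matrix n n R} (hs : P.IsSymm)
    (hP : IsIdempotentElem P) {i j : n} (hi : P i i = 1) (hij : i ≠ j) : P i j = 0 := by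
  have hsum : ∑ k ∈ Finset.univ.erase i, P i k * P i k = 0 := by
    have h := hs.apply_self_eq_sum_mul_self hP i
    rw [← Finset.add_sum_erase _ _ (Finset.mem_univ i), hi, mul_one] at h
    exact add_eq_left.mp h.symm
  rw [Finset.sum_eq_zero_iff_of_nonneg fun k _ => mul_self_nonneg (P i k)] at hsum
  exact mul_self_eq_zero.mp (hsum j (Finset.mem_erase.mpr ⟨hij.symm, Finset.mem_univ j⟩))

theorem isSymm_vecMulVec_self [CommMagma R] (v : n → R) : (vecMulVec v v).IsSymm :=
  transpose_vecMulVec v v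

theorem isIdempotentElem_vecMulVec_add_smul_vecMulVec [Fintype n] [CommRing R]
    {u w : n → R} {c : R} (hu : u ⬝ᵥ u = 1) (huw : u ⬝ᵥ w = 0) (hw : c * (w ⬝ᵥ w) = 1) :
    IsIdempotentElem (vecMulVec u u + c • vecMulVec w w) := by
  simp only [IsIdempotentElem, add_mul, mul_add, Matrix.smul_mul, Matrix.mul_smul,
    vecMulVec_mul_vecMulVec, hu, huw, dotProduct_comm w u, smul_smul, vecMulVec_smul, hw,
    zero_smul, one_smul, vecMulVec_zero, smul_zero, add_zero, zero_add]

theorem trace_vecMulVec_add_smul_vecMulVec [Fintype n] [CommRing R] (u w : n → R) (c : R) :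
    trace (vecMulVec u u + c • vecMulVec w w) = u ⬝ᵥ u + c * (w ⬝ᵥ w) := by
  simp only [trace_add, trace_smul, trace_vecMulVec, smul_eq_mul]

end Matrix

theorem Set.not_isPreconnected_of_one_lt_ncard {X : Type*} [TopologicalSpace X] [T1Space X]
    {s : Set X} (hs : 1 < s.ncard) : ¬IsPreconnected s := fun h =>
  have ⟨hnt, hfin⟩ := Set.one_lt_ncard_iff_nontrivial_and_finite.mp hs
  h.infinite_of_nontrivial hnt hfin

open Matrix

theorem proj8_eq_vecMulVec (ε₂ ε₃ : ℝ) :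
    proj8 ε₂ ε₃ = vecMulVec ![1, 0, 0, 0] ![1, 0, 0, 0] +
      (1/3 : ℝ) • vecMulVec ![0, 1, ε₂, ε₃] ![0, 1, ε₂, ε₃] := by
  ext i j
  fin_cases i <;> fin_cases j <;> simp [proj8, mul_assoc]

theorem proj8_mem_level8 {ε₂ ε₃ : ℝ} (h₂ : ε₂ * ε₂ = 1) (h₃ : ε₃ * ε₃ = 1) :
    proj8 ε₂ ε₃ ∈ level8 := by
  have hu : ![(1 : ℝ), 0, 0, 0] ⬝ᵥ ![1, 0, 0, 0] = 1 := by
    simp [dotProduct, Fin.sum_univ_four]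
  have huw : ![(1 : ℝ), 0, 0, 0] ⬝ᵥ ![0, 1, ε₂, ε₃] = 0 := by
    simp [dotProduct, Fin.sum_univ_four]
  have hw : (1/3 : ℝ) * (![0, 1, ε₂, ε₃] ⬝ᵥ ![0, 1, ε₂, ε₃]) = 1 := by
    simp only [dotProduct, Fin.sum_univ_four, cons_val_zero, cons_val_one, cons_val, h₂, h₃]
    norm_num
  rw [proj8_eq_vecMulVec]
  refine ⟨(isSymm_vecMulVec_self _).add ((isSymm_vecMulVec_self _).smul _),
    isIdempotentElem_vecMulVec_add_smul_vecMulVec hu huw hw, ?_, fun i => ?_⟩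
  · rw [trace_vecMulVec_add_smul_vecMulVec, hu, hw]
    norm_num
  · fin_cases i <;> simp [h₂, h₃]

theorem exists_eq_proj8_of_mem_level8 {P : Matrix (Fin 4) (Fin 4) ℝ} (hP : P ∈ level8) :
    ∃ ε₂ ε₃ : ℝ, ε₂ * ε₂ = 1 ∧ ε₃ * ε₃ = 1 ∧ P = proj8 ε₂ ε₃ := by
  obtain ⟨hs, hidem, -, hdiag⟩ := hP
  have h00 : P 0 0 = 1 := hdiag 0
  have h11 : P 1 1 = 1/3 := hdiag 1
  have h22 : P 2 2 = 1/3 := hdiag 2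
  have h33 : P 3 3 = 1/3 := hdiag 3
  have hrow0 : ∀ j ≠ 0, P 0 j = 0 := fun j hj =>
    hs.apply_eq_zero_of_apply_self_eq_one hidem h00 hj.symm
  have hcol0 : ∀ j ≠ 0, P j 0 = 0 := fun j hj => (hs.apply 0 j).trans (hrow0 j hj)
  have r1 := hs.apply_self_eq_sum_mul_self hidem 1
  have r2 := hs.apply_self_eq_sum_mul_self hidem 2
  have r3 := hs.apply_self_eq_sum_mul_self hidem 3
  have r23 : (P * P) 2 3 = P 2 3 := by rw [hidem]
  simp only [Fin.sum_univ_four, mul_apply, hs.apply 1 2, hs.apply 1 3, hs.apply 2 3, hrow0,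
    hcol0, h11, h22, h33, ne_eq, Fin.reduceEq, not_false_eq_true] at r1 r2 r3 r23
  obtain ⟨ε₂, h12⟩ : ∃ ε : ℝ, P 1 2 = ε / 3 := ⟨3 * P 1 2, by ring⟩
  obtain ⟨ε₃, h13⟩ : ∃ ε : ℝ, P 1 3 = ε / 3 := ⟨3 * P 1 3, by ring⟩
  simp only [h12, h13] at r1 r2 r3 r23
  have h₂ : ε₂ * ε₂ = 1 := by linear_combination (-9/2) * (r1 + r2 - r3)
  have h₃ : ε₃ * ε₃ = 1 := by linear_combination (-9/2) * (r1 + r3 - r2)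
  have h23 : P 2 3 = ε₂ * ε₃ / 3 := by linear_combination -3 * r23
  refine ⟨ε₂, ε₃, h₂, h₃, ?_⟩
  ext i j
  fin_cases i <;> fin_cases j <;>
    simp [proj8, hrow0, hcol0, h00, h11, h22, h33, hs.apply 1 2, hs.apply 1 3, hs.apply 2 3,
      h12, h13, h23, mul_assoc, h₂, h₃] <;> ring

theorem level8_eq :
    level8 = {P | ∃ ε₂ ε₃ : ℝ, (ε₂ = 1 ∨ ε₂ = -1) ∧ (ε₃ = 1 ∨ ε₃ = -1) ∧
        P = proj8 ε₂ ε₃} := by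
  ext P
  simp only [Set.mem_ofPred_eq, ← mul_self_eq_one_iff]
  refine ⟨exists_eq_proj8_of_mem_level8, ?_⟩
  rintro ⟨ε₂, ε₃, h₂, h₃, rfl⟩
  exact proj8_mem_level8 h₂ h₃

theorem injective_uncurry_proj8 : Function.Injective (Function.uncurry proj8) := by
  rintro ⟨a, b⟩ ⟨c, d⟩ h
  obtain rfl : a = c := by simpa [proj8] using congrFun₂ h 1 2
  obtain rfl : b = d := by simpa [proj8] using congrFun₂ h 1 3
  rfl

theorem level8_eq_image :
    level8 = Function.uncurry proj8 '' ({1, -1} ×ˢ {1, -1}) := by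
  rw [level8_eq]
  ext P
  simp only [Set.mem_image, Set.mem_prod, Set.mem_insert_iff, Set.mem_singleton_iff,
    Prod.exists, Function.uncurry_apply_pair, and_assoc, @eq_comm _ _ P]
  rfl

theorem level8_ncard : level8.ncard = 4 := by
  rw [level8_eq_image, Set.ncard_image_of_injective _ injective_uncurry_proj8, Set.ncard_prod,
    Set.ncard_pair (by norm_num : (1 : ℝ) ≠ -1)]

/-- The set of symmetric idempotent `4 × 4` real matrices of trace `2` with
diagonal `(1, 1/3, 1/3, 1/3)` consists of exactly the four block-diagonal
matrices `Diag(1) ⊕ (1/3)·v vᵀ`, `v = (1, ±1, ±1)`; it has exactly four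
elements and is not connected. -/
theorem level_one_third_four_points :
    (level8 = {P | ∃ ε₂ ε₃ : ℝ, (ε₂ = 1 ∨ ε₂ = -1) ∧ (ε₃ = 1 ∨ ε₃ = -1) ∧
        P = proj8 ε₂ ε₃})
    ∧ level8.ncard = 4
    ∧ ¬ IsConnected level8 :=
  ⟨level8_eq, level8_ncard, fun h =>
    Set.not_isPreconnected_of_one_lt_ncard (by rw [level8_ncard]; norm_num) h.isPreconnected⟩
end

section
/- A matrix F ∈ Mat_{2×4}(ℝ) belongs to F^{(1,1,0,0)}_{4,2} (i.e. F Fᵀ = I_2, its first two columns have squared norm 1 and its last two columns have squared norm 0) if and only if F = [ A | 0 ], where A ∈ O(2) is the 2×2 block formed by the first two columns and 0 is the 2×2 zero block. Consequently F^{(1,1,0,0)}_{4,2} is homeomorphic to the orthogonal group O(2) and, in particular, is not connected. -/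
/-!
For `d = (1, …, 1, 0, …, 0)`: columns of squared norm `0` vanish, so `F = [A | 0]` and
`F Fᵀ = A Aᵀ`; conversely `A Aᵀ = 1` forces `Aᵀ A = 1`, i.e. unit columns for `A`. Hence
`F ↦ A` identifies the frame space with `O(k)`, which is disconnected: `det` is continuous,
takes only the values `±1` there, and takes both.
-/

def frames (n k : ℕ) (d : Fin n → ℝ) : Set (Matrix (Fin k) (Fin n) ℝ) :=
  {F | F * F.transpose = 1 ∧ ∀ j, ∑ i, (F i j) ^ 2 = d j}

open Matrix

theorem Matrix.mul_transpose_eq_add_of_fin_add {l R : Type*} [Fintype l]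
    [NonUnitalNonAssocSemiring R] {k m : ℕ} (F : Matrix l (Fin (k + m)) R) :
    F * Fᵀ = F.submatrix id (Fin.castAdd m) * (F.submatrix id (Fin.castAdd m))ᵀ +
      F.submatrix id (Fin.natAdd k) * (F.submatrix id (Fin.natAdd k))ᵀ := by
  ext i j
  simp [mul_apply, Fin.sum_univ_add]

theorem Matrix.sum_sq_col_eq_one_of_mul_transpose_eq_one {n R : Type*} [Fintype n]
    [DecidableEq n] [CommRing R] {A : Matrix n n R} (hA : A * Aᵀ = 1) (j : n) :
    ∑ i, A i j ^ 2 = 1 := by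
  have hAA : Aᵀ * A = 1 := mul_eq_one_comm.mp hA
  simpa [mul_apply, sq] using congrFun (congrFun hAA j) j

theorem Matrix.forall_sum_sq_col_eq_zero_iff {l n R : Type*} [Fintype l] [Ring R]
    [LinearOrder R] [IsStrictOrderedRing R] (B : Matrix l n R) :
    (∀ j, ∑ i, B i j ^ 2 = 0) ↔ B = 0 := by
  simp only [sq, Finset.sum_mul_self_eq_zero_iff, Finset.mem_univ, forall_const]
  exact ⟨fun h => ext fun i j => h j i, fun h j i => by simp [h]⟩

theorem mem_frames_append_one_zero_iff {k m : ℕ} (F : Matrix (Fin k) (Fin (k + m)) ℝ) :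
    F ∈ frames (k + m) k (Fin.append 1 0) ↔
      F.submatrix id (Fin.castAdd m) * (F.submatrix id (Fin.castAdd m))ᵀ = 1 ∧
        F.submatrix id (Fin.natAdd k) = 0 := by
  rw [frames, Set.mem_ofPred_eq, mul_transpose_eq_add_of_fin_add, Fin.forall_fin_add]
  simp only [Fin.append_left, Fin.append_right, Pi.one_apply, Pi.zero_apply]
  set A := F.submatrix id (Fin.castAdd m)
  set B := F.submatrix id (Fin.natAdd k)
  change _ ∧ (∀ j, ∑ i, A i j ^ 2 = 1) ∧ (∀ j, ∑ i, B i j ^ 2 = 0) ↔ _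
  rw [forall_sum_sq_col_eq_zero_iff]
  constructor
  · rintro ⟨hF, -, hB⟩
    exact ⟨by simpa [hB] using hF, hB⟩
  · rintro ⟨hA, hB⟩
    exact ⟨by simpa [hB] using hA, sum_sq_col_eq_one_of_mul_transpose_eq_one hA, hB⟩

def Matrix.appendZeroCols {k : ℕ} (m : ℕ) (A : Matrix (Fin k) (Fin k) ℝ) :
    Matrix (Fin k) (Fin (k + m)) ℝ :=
  of fun i => Fin.append (A i) 0

@[simp]
theorem Matrix.appendZeroCols_submatrix_castAdd {k m : ℕ} (A : Matrix (Fin k) (Fin k) ℝ) :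
    (A.appendZeroCols m).submatrix id (Fin.castAdd m) = A := by
  ext i j
  simp [appendZeroCols]

@[simp]
theorem Matrix.appendZeroCols_submatrix_natAdd {k m : ℕ} (A : Matrix (Fin k) (Fin k) ℝ) :
    (A.appendZeroCols m).submatrix id (Fin.natAdd k) = 0 := by
  ext i j
  simp [appendZeroCols]

theorem Matrix.continuous_appendZeroCols (k m : ℕ) :
    Continuous (appendZeroCols (k := k) m) := by
  refine continuous_matrix fun i j => ?_
  refine Fin.addCases (fun j => ?_) (fun j => ?_) j
  · simpa [appendZeroCols] using continuous_id.matrix_elem i j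
  · simpa [appendZeroCols] using continuous_const

def framesHomeomorphOrthogonal (k m : ℕ) :
    frames (k + m) k (Fin.append 1 0) ≃ₜ {A : Matrix (Fin k) (Fin k) ℝ | A * Aᵀ = 1} where
  toFun F := ⟨F.1.submatrix id (Fin.castAdd m), ((mem_frames_append_one_zero_iff F.1).mp F.2).1⟩
  invFun A := ⟨A.1.appendZeroCols m, (mem_frames_append_one_zero_iff _).mpr
    ⟨by rw [appendZeroCols_submatrix_castAdd]; exact A.2, appendZeroCols_submatrix_natAdd _⟩⟩
  left_inv := by
    rintro ⟨F, hF⟩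
    have hB := ((mem_frames_append_one_zero_iff F).mp hF).2
    ext i j
    refine Fin.addCases (fun j => ?_) (fun j => ?_) j
    · simp [appendZeroCols]
    · simpa [appendZeroCols] using (congrFun (congrFun hB i) j).symm
  right_inv A := Subtype.ext A.1.appendZeroCols_submatrix_castAdd
  continuous_toFun := (continuous_subtype_val.matrix_submatrix _ _).subtype_mk _
  continuous_invFun := ((continuous_appendZeroCols k m).comp continuous_subtype_val).subtype_mk _

theorem Matrix.det_sq_eq_one_of_mul_transpose_eq_one {n R : Type*} [Fintype n] [DecidableEq n]
    [CommRing R] {A : Matrix n n R} (hA : A * Aᵀ = 1) : A.det ^ 2 = 1 := by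
  simpa [det_transpose, sq] using congrArg det hA

theorem Matrix.diagonal_mulSingle_neg_one_mul_transpose {n R : Type*} [Fintype n] [DecidableEq n]
    [CommRing R] (i : n) :
    diagonal (Pi.mulSingle i (-1 : R)) * (diagonal (Pi.mulSingle i (-1 : R)))ᵀ = 1 := by
  rw [diagonal_transpose, diagonal_mul_diagonal, ← Pi.mul_def, ← Pi.mulSingle_mul, neg_one_mul,
    neg_neg, Pi.mulSingle_one]
  exact diagonal_one

theorem not_isConnected_orthogonal {n : Type*} [Fintype n] [DecidableEq n] [Nonempty n] :
    ¬ IsConnected {A : Matrix n n ℝ | A * Aᵀ = 1} := by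
  intro hconn
  obtain ⟨i⟩ := ‹Nonempty n›
  have hdet : (diagonal (Pi.mulSingle i (-1 : ℝ))).det = -1 := by
    simp [det_diagonal, Finset.prod_pi_mulSingle']
  obtain ⟨A, hA, hA0⟩ := hconn.isPreconnected.intermediate_value
    (diagonal_mulSingle_neg_one_mul_transpose i) (by simp : (1 : Matrix n n ℝ) ∈ _)
    (f := det) continuous_id.matrix_det.continuousOn
    (by norm_num [hdet] : (0 : ℝ) ∈ Set.Icc _ _)
  have hsq := det_sq_eq_one_of_mul_transpose_eq_one hA
  rw [hA0] at hsq
  norm_num at hsq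

/-- A matrix `F ∈ Mat_{2×4}(ℝ)` belongs to `F^{(1,1,0,0)}_{4,2}` if and only
if `F = [ A | 0 ]` with `A ∈ O(2)` the block of the first two columns and the
last two columns zero.  Consequently `F^{(1,1,0,0)}_{4,2}` is homeomorphic to
the orthogonal group `O(2)` and, in particular, is not connected. -/
theorem frames_1100_is_O2 :
    (∀ F : Matrix (Fin 2) (Fin 4) ℝ,
      F ∈ frames 4 2 ![1, 1, 0, 0] ↔
        ((Matrix.of fun a b : Fin 2 => F a (Fin.castLE (by omega) b)) *
            (Matrix.of fun a b : Fin 2 => F a (Fin.castLE (by omega) b)).transpose = 1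
          ∧ ∀ a : Fin 2, F a 2 = 0 ∧ F a 3 = 0))
    ∧ Nonempty ((frames 4 2 ![1, 1, 0, 0]) ≃ₜ
        ({A : Matrix (Fin 2) (Fin 2) ℝ | A * A.transpose = 1} : Set _))
    ∧ ¬ IsConnected (frames 4 2 ![1, 1, 0, 0]) := by
  have hd : (Fin.append 1 0 : Fin (2 + 2) → ℝ) = ![1, 1, 0, 0] := by
    ext j
    fin_cases j <;> rfl
  have e : frames 4 2 ![1, 1, 0, 0] ≃ₜ {A : Matrix (Fin 2) (Fin 2) ℝ | A * Aᵀ = 1} :=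
    hd ▸ framesHomeomorphOrthogonal 2 2
  refine ⟨fun F => ?_, ⟨e⟩, ?_⟩
  · rw [← hd]
    refine (mem_frames_append_one_zero_iff (k := 2) (m := 2) F).trans (and_congr Iff.rfl ?_)
    rw [← Matrix.ext_iff]
    simp [Fin.forall_fin_two]
  · rw [isConnected_iff_connectedSpace, e.connectedSpace_iff, ← isConnected_iff_connectedSpace]
    exact not_isConnected_orthogonal
end
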